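/- arXiv:1407.5282 — 3 statements merged into one kernel-verified Lean document; each statement's English description precedes it below -/
import Mathlib

section
/- Let n ≥ 1, p > 1 and 1 ≤ k ≤ n. For every Schwartz function u : ℝⁿ → ℂ, Re ∫_{ℝⁿ} |u(x)|^{p-1} u(x) ∂ₖū(x) dx = 0, where ∂ₖ denotes the partial derivative in the k-th coordinate. -/
/-!
Pointwise, `Re (|u|^{p-1} u ∂ₖū) = (p + 1)⁻¹ ∂ₖ |u|^{p+1}`, since the real inner product on `ℂ`
is `⟪z, w⟫_ℝ = Re (z w̄)` and `∇ ‖z‖^q = q ‖z‖^{q-2} z`. Both `|u|^{p+1}` and its partial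
derivative are integrable, so the integral of the derivative vanishes.
-/

open MeasureTheory

section

variable {E F : Type*} [NormedAddCommGroup E] [NormedSpace ℝ E] [FiniteDimensional ℝ E]
  [MeasurableSpace E] [BorelSpace E] {μ : Measure E} [μ.IsAddHaarMeasure]
  [NormedAddCommGroup F] [NormedSpace ℝ F]

theorem integral_eq_zero_of_hasLineDerivAt_of_integrable {f f' : E → F} {v : E}
    (hf : Integrable f μ) (hf' : Integrable f' μ) (hd : ∀ x, HasLineDerivAt ℝ f (f' x) x v) :
    ∫ x, f' x ∂μ = 0 := by
  have h := integral_bilinear_hasLineDerivAt_right_eq_neg_left_of_integrable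
    (B := ContinuousLinearMap.lsmul ℝ ℝ) (f := fun _ => (1 : ℝ)) (f' := fun _ => 0)
    (by simp) (by simpa using hf') (by simpa using hf)
    (fun x _ => by simpa using (hasFDerivAt_const (1 : ℝ) x).hasLineDerivAt v) (fun x _ => hd x)
  simpa using h

end

section

variable {E : Type*} [NormedAddCommGroup E] [NormedSpace ℝ E]

theorem fderiv_conj_apply {u : E → ℂ} (x v : E) :
    fderiv ℝ (fun y => (starRingEnd ℂ) (u y)) x v = (starRingEnd ℂ) (fderiv ℝ u x v) := by
  change fderiv ℝ (fun y => star (u y)) x v = star (fderiv ℝ u x v)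
  rw [fderiv_star]
  rfl

theorem hasLineDerivAt_norm_rpow_add_one {u : E → ℂ} {x v : E} {p : ℝ}
    (hu : DifferentiableAt ℝ u x) (hp : 0 < p) :
    HasLineDerivAt ℝ (fun y => ‖u y‖ ^ (p + 1))
      ((p + 1) * (((‖u x‖ ^ (p - 1) : ℝ) : ℂ) * u x *
        fderiv ℝ (fun y => (starRingEnd ℂ) (u y)) x v).re) x v := by
  have h : HasLineDerivAt ℝ (fun y => ‖u y‖ ^ (p + 1)) _ x v :=
    ((hasFDerivAt_norm_rpow (u x) (by linarith : 1 < p + 1)).comp x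
      hu.hasFDerivAt).hasLineDerivAt v
  convert h using 1
  rw [fderiv_conj_apply, show p + 1 - 2 = p - 1 by ring]
  simp only [ContinuousLinearMap.comp_apply, smul_apply, innerSL_apply_apply,
    smul_eq_mul, ← real_inner_comm (u x), Complex.inner, mul_assoc, Complex.re_ofReal_mul]

end

namespace SchwartzMap

variable {E : Type*} [NormedAddCommGroup E] [NormedSpace ℝ E] [MeasurableSpace E] [BorelSpace E]
  {μ : Measure E}

theorem integrable_norm_rpow_mul_mul (u : 𝓢(E, ℂ)) {g : E → ℂ} (hg : Integrable g μ) {q : ℝ}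
    (hq : 0 ≤ q) : Integrable (fun x => ((‖u x‖ ^ q : ℝ) : ℂ) * u x * g x) μ := by
  set C := SchwartzMap.seminorm ℝ 0 0 u
  refine hg.bdd_mul (c := C ^ q * C) (by fun_prop) (ae_of_all _ fun x => ?_)
  have hu : ‖u x‖ ≤ C := u.norm_le_seminorm ℝ x
  rw [norm_mul, Complex.norm_real, Real.norm_of_nonneg (by positivity)]
  gcongr

variable [μ.HasTemperateGrowth]

theorem integrable_norm_rpow (u : 𝓢(E, ℂ)) {q : ℝ} (hq : 0 < q) :
    Integrable (fun x => ‖u x‖ ^ q) μ := by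
  simpa [hq.le] using
    (u.memLp (ENNReal.ofReal q) μ).integrable_norm_rpow (by simpa using hq) (by simp)

theorem integrable_fderiv_conj_apply [SecondCountableTopology E] (u : 𝓢(E, ℂ)) (v : E) :
    Integrable (fun x => fderiv ℝ (fun y => (starRingEnd ℂ) (u y)) x v) μ :=
  (LineDeriv.lineDerivOp v (u.postcompCLM (Complex.conjCLE : ℂ →L[ℝ] ℂ))).integrable

end SchwartzMap

theorem nonlinearity_momentum_cancellation_general {n : ℕ} (p : ℝ) (hp : 1 < p) (k : Fin n)
    (u : SchwartzMap (EuclideanSpace ℝ (Fin n)) ℂ) :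
    (∫ x, ((‖u x‖ ^ (p - 1) : ℝ) : ℂ) * u x *
      fderiv ℝ (fun y => (starRingEnd ℂ) (u y)) x (EuclideanSpace.single k 1)).re = 0 := by
  have hint := u.integrable_norm_rpow_mul_mul (μ := volume)
    (u.integrable_fderiv_conj_apply (EuclideanSpace.single k 1)) (by linarith : 0 ≤ p - 1)
  have hzero := integral_eq_zero_of_hasLineDerivAt_of_integrable
    (u.integrable_norm_rpow (by linarith : 0 < p + 1)) (hint.re.const_mul (p + 1))
    (fun x => hasLineDerivAt_norm_rpow_add_one u.differentiableAt (by linarith))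
  rw [integral_const_mul, integral_re hint] at hzero
  exact (mul_eq_zero.mp hzero).resolve_left (by linarith)

/-- For every Schwartz function `u : ℝⁿ → ℂ` and `p > 1`,
`Re ∫ |u|^{p-1} u ∂ₖū dx = 0`, the key cancellation for the power nonlinearity. -/
theorem nonlinearity_momentum_cancellation {n : ℕ} (hn : 1 ≤ n) (p : ℝ) (hp : 1 < p) (k : Fin n)
    (u : SchwartzMap (EuclideanSpace ℝ (Fin n)) ℂ) :
    (∫ x, ((‖u x‖ ^ (p - 1) : ℝ) : ℂ) * u x *
      fderiv ℝ (fun y => (starRingEnd ℂ) (u y)) x (EuclideanSpace.single k 1)).re = 0 :=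
  nonlinearity_momentum_cancellation_general p hp k u
end

section
/- Let n ≥ 1, p > 1, λ ∈ ℝ and 0 < a < b. Suppose u and v are smooth complex-valued functions related by the pseudo-conformal transform u(t,x) = (it)^{-n/2} e^{i|x|²/(2t)} conj(v(1/t, x/t)) for all t ∈ (a,b) and x ∈ ℝⁿ, where (it)^{-n/2} is taken with the principal branch of the complex power and conj denotes complex conjugation. If u satisfies i∂ₜu + (1/2)Δu = λ|u|^{p-1}u pointwise on (a,b) × ℝⁿ, then v satisfies i∂ₜv + (1/2)Δv = λ t^{(n(p-1)-4)/2}|v|^{p-1}v pointwise on (1/b, 1/a) × ℝⁿ. -/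
open MeasureTheory Set

/-- Spatial Laplacian, as the sum of the second partial derivatives. -/
noncomputable def laplacian' {n : ℕ} (f : EuclideanSpace ℝ (Fin n) → ℂ)
    (x : EuclideanSpace ℝ (Fin n)) : ℂ :=
  ∑ k : Fin n, fderiv ℝ (fun y => fderiv ℝ f y (EuclideanSpace.single k 1)) x
    (EuclideanSpace.single k 1)

section PCAux

open Complex

noncomputable def conjCLM : ℂ →L[ℝ] ℂ := Complex.conjCLE

variable {n : ℕ}

/-- Derivative in time of the pseudo-conformal formula. -/
lemma pc_hasDerivAt_time (v : ℝ → EuclideanSpace ℝ (Fin n) → ℂ)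
    (hv : ContDiff ℝ (⊤ : ℕ∞) fun q : ℝ × EuclideanSpace ℝ (Fin n) => v q.1 q.2)
    (s : ℝ) (hs : 0 < s) (X : EuclideanSpace ℝ (Fin n)) :
    HasDerivAt (fun τ : ℝ => (Complex.I * (τ : ℂ)) ^ (-(n : ℂ) / 2) *
        Complex.exp (Complex.I * ((‖X‖ ^ 2 / (2 * τ) : ℝ) : ℂ)) *
        (starRingEnd ℂ) (v (1 / τ) ((1 / τ) • X)))
      (((-(n:ℂ)/2 * (I * s) ^ (-(n:ℂ)/2 - 1) * I) *
          Complex.exp (Complex.I * ((‖X‖ ^ 2 / (2 * s) : ℝ) : ℂ)) +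
        (I * s) ^ (-(n:ℂ)/2) *
          (Complex.exp (Complex.I * ((‖X‖ ^ 2 / (2 * s) : ℝ) : ℂ)) *
            (I * ((- (‖X‖^2 * 2) / (2*s)^2 : ℝ) : ℂ)))) *
        (starRingEnd ℂ) (v (1 / s) ((1 / s) • X)) +
       ((I * s) ^ (-(n:ℂ)/2) * Complex.exp (Complex.I * ((‖X‖ ^ 2 / (2 * s) : ℝ) : ℂ))) *
        (starRingEnd ℂ) (fderiv ℝ (fun q : ℝ × EuclideanSpace ℝ (Fin n) => v q.1 q.2)
          (1/s, (1/s) • X) (-(1 / s^2), (-(1 / s^2)) • X)))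
      s := by
  have hs0 : s ≠ 0 := ne_of_gt hs
  have hA : HasDerivAt (fun τ : ℝ => (Complex.I * (τ : ℂ)) ^ (-(n : ℂ) / 2))
      (-(n:ℂ)/2 * (I * s) ^ (-(n:ℂ)/2 - 1) * I) s := by
    have h1 : HasDerivAt (fun z : ℂ => (Complex.I * z) ^ (-(n : ℂ) / 2))
        (-(n:ℂ)/2 * (I * s) ^ (-(n:ℂ)/2 - 1) * I) (s : ℂ) := by
      simpa using ((hasDerivAt_id (s:ℂ)).const_mul I).cpow_const
        (c := -(n:ℂ)/2) (by simp [Complex.mem_slitPlane_iff, hs0])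
    exact h1.comp_ofReal
  have hB : HasDerivAt (fun τ : ℝ => Complex.exp (Complex.I * ((‖X‖ ^ 2 / (2 * τ) : ℝ) : ℂ)))
      (Complex.exp (Complex.I * ((‖X‖ ^ 2 / (2 * s) : ℝ) : ℂ)) *
        (I * ((- (‖X‖^2 * 2) / (2*s)^2 : ℝ) : ℂ))) s := by
    have hr : HasDerivAt (fun τ : ℝ => ‖X‖ ^ 2 / (2 * τ)) (- (‖X‖^2 * 2) / (2*s)^2) s := by
      have h2 : HasDerivAt (fun τ : ℝ => 2 * τ) 2 s := by
        simpa using (hasDerivAt_id s).const_mul 2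
      have := (hasDerivAt_const s (‖X‖^2 : ℝ)).div h2 (by positivity)
      exact this.congr_deriv (by ring)
    have := ((hr.ofReal_comp).const_mul I).cexp
    simpa [mul_comm] using this
  have hC : HasDerivAt (fun τ : ℝ => (starRingEnd ℂ) (v (1 / τ) ((1 / τ) • X)))
      ((starRingEnd ℂ) (fderiv ℝ (fun q : ℝ × EuclideanSpace ℝ (Fin n) => v q.1 q.2)
        (1/s, (1/s) • X) (-(1 / s^2), (-(1 / s^2)) • X))) s := by
    have hγ : HasDerivAt (fun τ : ℝ => ((1/τ, (1/τ) • X) : ℝ × EuclideanSpace ℝ (Fin n)))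
        ((-(1/s^2), (-(1/s^2)) • X)) s := by
      have hinv : HasDerivAt (fun τ : ℝ => 1/τ) (-(1/s^2)) s := by
        simpa [one_div] using hasDerivAt_inv hs0
      exact hinv.prodMk (hinv.smul_const X)
    have hV := ((hv.differentiable (by simp)) ((1:ℝ)/s, (1/s) • X)).hasFDerivAt
    have hcomp := hV.comp_hasDerivAt s hγ
    exact conjCLM.hasFDerivAt.comp_hasDerivAt s hcomp
  exact (hA.mul hB).mul hC

/-- Interchange: second partial via the full second derivative. -/
lemma pc_second_apply (w : EuclideanSpace ℝ (Fin n) → ℂ) (hw : ContDiff ℝ (⊤ : ℕ∞) w)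
    (z ξ η : EuclideanSpace ℝ (Fin n)) :
    fderiv ℝ (fun y => fderiv ℝ w y ξ) z η = (fderiv ℝ (fderiv ℝ w) z η) ξ := by
  have hd := ((hw.fderiv_right (m := (⊤ : ℕ∞)) (by simp)).differentiable (by simp) z).hasFDerivAt
  have h2 := ((ContinuousLinearMap.apply ℝ ℂ ξ).hasFDerivAt.comp z hd)
  have h3 : fderiv ℝ (fun y => fderiv ℝ w y ξ) z = _ := HasFDerivAt.fderiv (by exact h2)
  rw [h3]; rfl

/-- First spatial derivative of the pseudo-conformal formula. -/
lemma pc_fderiv1 (w : EuclideanSpace ℝ (Fin n) → ℂ) (hw : ContDiff ℝ (⊤ : ℕ∞) w) (s r : ℝ) (c : ℂ)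
    (y : EuclideanSpace ℝ (Fin n)) (k : Fin n) :
    fderiv ℝ (fun y : EuclideanSpace ℝ (Fin n) =>
        c * Complex.exp (Complex.I * ((‖y‖ ^ 2 / (2 * s) : ℝ) : ℂ)) *
        (starRingEnd ℂ) (w (r • y))) y (EuclideanSpace.single k 1)
      = c * Complex.exp (Complex.I * ((‖y‖ ^ 2 / (2 * s) : ℝ) : ℂ)) *
        ((Complex.I * ((y k : ℝ) / s)) * (starRingEnd ℂ) (w (r • y)) +
          (r : ℂ) * (starRingEnd ℂ) (fderiv ℝ w (r • y) (EuclideanSpace.single k 1))) := by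
  have hq : HasFDerivAt (fun y : EuclideanSpace ℝ (Fin n) => (‖y‖^2 : ℝ))
      (2 • innerSL ℝ y) y := (hasStrictFDerivAt_norm_sq y).hasFDerivAt
  have hofReal := Complex.ofRealCLM.hasFDerivAt.comp y (hq.mul_const ((2*s)⁻¹))
  have hexp := (hofReal.const_mul Complex.I).cexp
  have hcG := hexp.const_mul c
  have hsm : HasFDerivAt (fun y : EuclideanSpace ℝ (Fin n) => r • y)
      (r • ContinuousLinearMap.id ℝ (EuclideanSpace ℝ (Fin n))) y :=
    (hasFDerivAt_id y).const_smul r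
  have hw' := ((hw.differentiable (by simp)) (r • y)).hasFDerivAt
  have hN := conjCLM.hasFDerivAt.comp y (hw'.comp y hsm)
  have hF := hcG.mul hN
  have hfd : fderiv ℝ (fun y : EuclideanSpace ℝ (Fin n) =>
      c * Complex.exp (Complex.I * ((‖y‖ ^ 2 / (2 * s) : ℝ) : ℂ)) *
      (starRingEnd ℂ) (w (r • y))) y = _ := HasFDerivAt.fderiv (by exact hF)
  rw [hfd]
  simp [conjCLM, EuclideanSpace.inner_single_right, Complex.real_smul]
  ring

/-- Second spatial derivative of the pseudo-conformal formula. -/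
lemma pc_fderiv2 (w : EuclideanSpace ℝ (Fin n) → ℂ) (hw : ContDiff ℝ (⊤ : ℕ∞) w) (s r : ℝ) (c : ℂ)
    (X : EuclideanSpace ℝ (Fin n)) (k : Fin n) :
    fderiv ℝ (fun y : EuclideanSpace ℝ (Fin n) =>
        (c * Complex.exp (Complex.I * ((‖y‖ ^ 2 / (2 * s) : ℝ) : ℂ))) *
        ((Complex.I * ((y k : ℝ) / s)) * (starRingEnd ℂ) (w (r • y)) +
          (r : ℂ) * (starRingEnd ℂ) (fderiv ℝ w (r • y) (EuclideanSpace.single k 1))))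
        X (EuclideanSpace.single k 1)
      = (c * Complex.exp (Complex.I * ((‖X‖ ^ 2 / (2 * s) : ℝ) : ℂ))) *
        ( (Complex.I * ((X k : ℝ) / s)) *
            ((Complex.I * ((X k : ℝ) / s)) * (starRingEnd ℂ) (w (r • X)) +
              (r : ℂ) * (starRingEnd ℂ) (fderiv ℝ w (r • X) (EuclideanSpace.single k 1)))
          + (Complex.I * ((1 : ℝ) / s)) * (starRingEnd ℂ) (w (r • X))
          + (Complex.I * ((X k : ℝ) / s)) *
              ((r : ℂ) * (starRingEnd ℂ) (fderiv ℝ w (r • X) (EuclideanSpace.single k 1)))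
          + (r : ℂ) * (r : ℂ) * (starRingEnd ℂ)
              (fderiv ℝ (fun z => fderiv ℝ w z (EuclideanSpace.single k 1)) (r • X)
                (EuclideanSpace.single k 1)) ) := by
  have hq : HasFDerivAt (fun y : EuclideanSpace ℝ (Fin n) => (‖y‖^2 : ℝ))
      (2 • innerSL ℝ X) X := (hasStrictFDerivAt_norm_sq X).hasFDerivAt
  have hexp := ((Complex.ofRealCLM.hasFDerivAt.comp X (hq.mul_const ((2*s)⁻¹))).const_mul
    Complex.I).cexp
  have hG := hexp.const_mul c
  have hsm : HasFDerivAt (fun y : EuclideanSpace ℝ (Fin n) => r • y)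
      (r • ContinuousLinearMap.id ℝ (EuclideanSpace ℝ (Fin n))) X :=
    (hasFDerivAt_id X).const_smul r
  have hw' := ((hw.differentiable (by simp)) (r • X)).hasFDerivAt
  have hN := conjCLM.hasFDerivAt.comp X (hw'.comp X hsm)
  have hyk : HasFDerivAt (fun y : EuclideanSpace ℝ (Fin n) => ((y k : ℝ) : ℂ) )
      (Complex.ofRealCLM.comp (EuclideanSpace.proj (𝕜 := ℝ) (ι := Fin n) k)) X :=
    Complex.ofRealCLM.hasFDerivAt.comp X
      (by exact (EuclideanSpace.proj (𝕜 := ℝ) (ι := Fin n) k).hasFDerivAt)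
  have h1 : HasFDerivAt (fun y : EuclideanSpace ℝ (Fin n) => (Complex.I * ((y k : ℝ) / s)) *
      (starRingEnd ℂ) (w (r • y))) _ X :=
    (((hyk.mul_const ((s:ℂ)⁻¹)).const_mul Complex.I)).mul hN
  have hdW := ((hw.fderiv_right (m := (⊤ : ℕ∞)) (by simp)).differentiable (by simp) (r • X)).hasFDerivAt
  have happ := (ContinuousLinearMap.apply ℝ ℂ (EuclideanSpace.single k 1)).hasFDerivAt.comp
    (r • X) hdW
  have hWk : HasFDerivAt (fun y : EuclideanSpace ℝ (Fin n) =>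
      (starRingEnd ℂ) (fderiv ℝ w (r • y) (EuclideanSpace.single k 1))) _ X :=
    conjCLM.hasFDerivAt.comp X ((by exact happ : HasFDerivAt
      (fun z : EuclideanSpace ℝ (Fin n) => fderiv ℝ w z (EuclideanSpace.single k 1)) _
      (r • X)).comp X hsm)
  have hH := h1.add (hWk.const_mul (r : ℂ))
  have hF := hG.mul hH
  have hfd : fderiv ℝ (fun y : EuclideanSpace ℝ (Fin n) =>
      (c * Complex.exp (Complex.I * ((‖y‖ ^ 2 / (2 * s) : ℝ) : ℂ))) *
      ((Complex.I * ((y k : ℝ) / s)) * (starRingEnd ℂ) (w (r • y)) +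
        (r : ℂ) * (starRingEnd ℂ) (fderiv ℝ w (r • y) (EuclideanSpace.single k 1)))) X = _ :=
    HasFDerivAt.fderiv (by exact hF)
  rw [hfd, pc_second_apply w hw]
  simp [conjCLM, EuclideanSpace.inner_single_right, Complex.real_smul, div_eq_mul_inv]
  ring

end PCAux

open Complex in
/-- The pseudo-conformal transform
`u(t,x) = (it)^{-n/2} e^{i|x|²/(2t)} conj(v(1/t, x/t))` sends solutions of
`i∂ₜu + (1/2)Δu = λ|u|^{p-1}u` on `(a,b) × ℝⁿ` to solutions of
`i∂ₜv + (1/2)Δv = λ t^{(n(p-1)-4)/2}|v|^{p-1}v` on `(1/b, 1/a) × ℝⁿ`. -/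
theorem pseudoConformal_transform_equation {n : ℕ} (hn : 1 ≤ n) (p lam a b : ℝ)
    (hp : 1 < p) (ha : 0 < a) (hab : a < b)
    (u v : ℝ → EuclideanSpace ℝ (Fin n) → ℂ)
    (hu : ContDiff ℝ (⊤ : ℕ∞) fun q : ℝ × EuclideanSpace ℝ (Fin n) => u q.1 q.2)
    (hv : ContDiff ℝ (⊤ : ℕ∞) fun q : ℝ × EuclideanSpace ℝ (Fin n) => v q.1 q.2)
    (htrans : ∀ t ∈ Ioo a b, ∀ x,
      u t x = (Complex.I * (t : ℂ)) ^ (-(n : ℂ) / 2) *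
        Complex.exp (Complex.I * ((‖x‖ ^ 2 / (2 * t) : ℝ) : ℂ)) *
        (starRingEnd ℂ) (v (1 / t) ((1 / t) • x)))
    (hPDE : ∀ t ∈ Ioo a b, ∀ x,
      Complex.I * deriv (fun τ => u τ x) t + (1/2 : ℂ) * laplacian' (u t) x
        = (lam : ℂ) * ((‖u t x‖ ^ (p - 1) : ℝ) : ℂ) * u t x) :
    ∀ t ∈ Ioo (1 / b) (1 / a), ∀ x,
      Complex.I * deriv (fun τ => v τ x) t + (1/2 : ℂ) * laplacian' (v t) x
        = (lam : ℂ) * ((t ^ (((n : ℝ) * (p - 1) - 4) / 2) : ℝ) : ℂ) *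
            ((‖v t x‖ ^ (p - 1) : ℝ) : ℂ) * v t x := by
  intro t ht x
  obtain ⟨htb, hta⟩ := ht
  have hb0 : 0 < b := lt_trans ha hab
  have ht0 : 0 < t := lt_trans (by positivity) htb
  have ht0' : t ≠ 0 := ne_of_gt ht0
  have htC : (t : ℂ) ≠ 0 := Complex.ofReal_ne_zero.mpr ht0'
  set s : ℝ := t⁻¹ with hs_def
  have hs0 : 0 < s := by positivity
  have hs0' : s ≠ 0 := ne_of_gt hs0
  have hsC : ((s : ℝ) : ℂ) = (t : ℂ)⁻¹ := by rw [hs_def, Complex.ofReal_inv]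
  have hsC0 : ((s : ℝ) : ℂ) ≠ 0 := Complex.ofReal_ne_zero.mpr hs0'
  have hts : 1 / s = t := by rw [hs_def, one_div, inv_inv]
  have hsa : a < s := by rw [hs_def, ← one_div]; exact (lt_one_div ha ht0).mpr hta
  have hsb : s < b := by rw [hs_def, ← one_div]; exact (one_div_lt ht0 hb0).mpr htb
  have hs : s ∈ Ioo a b := ⟨hsa, hsb⟩
  set X : EuclideanSpace ℝ (Fin n) := s • x with hX_def
  have htX : t • X = x := by
    rw [hX_def, smul_smul, hs_def, mul_inv_cancel₀ ht0', one_smul]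
  have hIs0 : Complex.I * (s : ℂ) ≠ 0 := mul_ne_zero Complex.I_ne_zero hsC0
  have hc0 : (Complex.I * (s : ℂ)) ^ (-(n : ℂ)/2) ≠ 0 := by
    rw [Ne, Complex.cpow_eq_zero_iff]; rintro ⟨h1, -⟩; exact hIs0 h1
  have hm0 : (Complex.I * (s : ℂ)) ^ (-(n : ℂ)/2) *
      Complex.exp (Complex.I * ((‖X‖ ^ 2 / (2 * s) : ℝ) : ℂ)) ≠ 0 :=
    mul_ne_zero hc0 (Complex.exp_ne_zero _)
  have hvt : ContDiff ℝ (⊤ : ℕ∞) (v t) := by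
    exact hv.comp ((contDiff_const (c := t)).prodMk contDiff_id)
  ------------------------------------------------------------------
  -- Step 1: time derivative of u at (s, X)
  have hT := pc_hasDerivAt_time v hv s hs0 X
  have hDu := hT.congr_of_eventuallyEq (by
    filter_upwards [isOpen_Ioo.mem_nhds hs] with τ hτ
    exact htrans τ hτ X)
  have hderiv0 := hDu.deriv
  rw [hts, htX] at hderiv0
  -- decompose the joint fderiv
  have hVd := ((hv.differentiable (by simp)) (t, x)).hasFDerivAt
  have h1t : HasDerivAt (fun τ => v τ x)
      (fderiv ℝ (fun q : ℝ × EuclideanSpace ℝ (Fin n) => v q.1 q.2) (t, x) (1, 0)) t := by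
    exact hVd.comp_hasDerivAt t ((hasDerivAt_id t).prodMk (hasDerivAt_const t x))
  have h2x : HasFDerivAt (v t)
      ((fderiv ℝ (fun q : ℝ × EuclideanSpace ℝ (Fin n) => v q.1 q.2) (t, x)).comp
        ((0 : EuclideanSpace ℝ (Fin n) →L[ℝ] ℝ).prod
          (ContinuousLinearMap.id ℝ (EuclideanSpace ℝ (Fin n))))) x := by
    exact hVd.comp x ((hasFDerivAt_const t x).prodMk (hasFDerivAt_id x))
  have h2x' : fderiv ℝ (v t) x x
      = fderiv ℝ (fun q : ℝ × EuclideanSpace ℝ (Fin n) => v q.1 q.2) (t, x) (0, x) := by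
    rw [h2x.fderiv]; rfl
  have hdec : fderiv ℝ (fun q : ℝ × EuclideanSpace ℝ (Fin n) => v q.1 q.2) (t, x)
      (-(1/s^2), (-(1/s^2)) • X)
      = ((-(1/s^2) : ℝ) : ℂ) * deriv (fun τ => v τ x) t
        + ((-(1/s^2) * s : ℝ) : ℂ) * fderiv ℝ (v t) x x := by
    have e1 : ((-(1/s^2) : ℝ), (-(1/s^2)) • X)
        = (-(1/s^2) : ℝ) • ((1:ℝ), (0 : EuclideanSpace ℝ (Fin n)))
          + (-(1/s^2) * s : ℝ) • ((0:ℝ), x) := by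
      rw [hX_def]
      refine Prod.ext (by simp) ?_
      simp [Prod.smul_snd, smul_smul]
    rw [e1, map_add, _root_.map_smul, _root_.map_smul, h2x', ← h1t.deriv]
    simp [Complex.real_smul]
  rw [hdec] at hderiv0
  -- clean the cpow quotient and cast coefficient
  have hA2 : -(n:ℂ)/2 * ((Complex.I * (s:ℂ)) ^ (-(n:ℂ)/2) / (Complex.I * (s:ℂ))) * Complex.I
      = (Complex.I * (s:ℂ)) ^ (-(n:ℂ)/2) * (-(n:ℂ)/(2*(s:ℂ))) := by
    field_simp
  rw [Complex.cpow_sub _ _ hIs0, Complex.cpow_one, hA2] at hderiv0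
  have hcoeff : ((- (‖X‖^2 * 2) / (2*s)^2 : ℝ) : ℂ)
      = -(((‖X‖^2 : ℝ) : ℂ))/(2*(s:ℂ)^2) := by
    push_cast
    field_simp
  rw [hcoeff] at hderiv0
  ------------------------------------------------------------------
  -- Step 2: spatial Laplacian of u at (s, X)
  have husF : u s = fun ξ => (Complex.I * (s:ℂ)) ^ (-(n:ℂ)/2) *
      Complex.exp (Complex.I * ((‖ξ‖ ^ 2 / (2 * s) : ℝ) : ℂ)) *
      (starRingEnd ℂ) (v t (t • ξ)) := by
    funext ξ
    rw [htrans s hs ξ, hts]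
  have hlapval : laplacian' (u s) X =
      ∑ k : Fin n, (((Complex.I * (s:ℂ)) ^ (-(n:ℂ)/2) *
        Complex.exp (Complex.I * ((‖X‖ ^ 2 / (2 * s) : ℝ) : ℂ))) *
        ( (Complex.I * ((X k : ℝ) / s)) *
            ((Complex.I * ((X k : ℝ) / s)) * (starRingEnd ℂ) (v t x) +
              (t : ℂ) * (starRingEnd ℂ) (fderiv ℝ (v t) x (EuclideanSpace.single k 1)))
          + (Complex.I * ((1 : ℝ) / s)) * (starRingEnd ℂ) (v t x)
          + (Complex.I * ((X k : ℝ) / s)) *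
              ((t : ℂ) * (starRingEnd ℂ) (fderiv ℝ (v t) x (EuclideanSpace.single k 1)))
          + (t : ℂ) * (t : ℂ) * (starRingEnd ℂ)
              (fderiv ℝ (fun z => fderiv ℝ (v t) z (EuclideanSpace.single k 1)) x
                (EuclideanSpace.single k 1)) )) := by
    rw [husF]
    simp only [laplacian']
    refine Finset.sum_congr rfl fun k _ => ?_
    simp only [pc_fderiv1 (v t) hvt s t ((Complex.I * (s:ℂ)) ^ (-(n:ℂ)/2))]
    rw [pc_fderiv2 (v t) hvt s t ((Complex.I * (s:ℂ)) ^ (-(n:ℂ)/2)) X k, htX]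
  -- sum identities
  have hXdec : (∑ k, X k • EuclideanSpace.single k (1:ℝ)) = X := by
    ext i
    rw [show (∑ k, X k • EuclideanSpace.single k (1:ℝ)) i
        = ∑ k, (X k • EuclideanSpace.single k (1:ℝ)) i from by
          rw [WithLp.ofLp_sum]; exact Finset.sum_apply i Finset.univ _]
    simp [EuclideanSpace.single_apply]
  have hnorm : ((‖X‖^2 : ℝ) : ℂ) = ∑ k, ((X k : ℝ) : ℂ)^2 := by
    rw [show (‖X‖^2 : ℝ) = ∑ k, X k ^ 2 by
      rw [EuclideanSpace.norm_eq, Real.sq_sqrt (by positivity)]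
      simp [_root_.sq_abs]]
    push_cast
    ring
  have hfderivX : fderiv ℝ (v t) x X
      = ∑ k, X k • fderiv ℝ (v t) x (EuclideanSpace.single k 1) := by
    conv_lhs => rw [← hXdec]
    rw [map_sum]
    exact Finset.sum_congr rfl fun k _ => by rw [_root_.map_smul]
  have hfxX : fderiv ℝ (v t) x X = s • fderiv ℝ (v t) x x := by
    rw [hX_def, _root_.map_smul]
  have hsum2 : (∑ k, ((X k : ℝ) : ℂ) * (starRingEnd ℂ)
        (fderiv ℝ (v t) x (EuclideanSpace.single k 1)))
      = ((s : ℝ) : ℂ) * (starRingEnd ℂ) (fderiv ℝ (v t) x x) := by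
    rw [show ((s : ℝ) : ℂ) * (starRingEnd ℂ) (fderiv ℝ (v t) x x)
        = (starRingEnd ℂ) (fderiv ℝ (v t) x X) by
      rw [hfxX, Complex.real_smul, map_mul, Complex.conj_ofReal]]
    rw [hfderivX, map_sum]
    refine Finset.sum_congr rfl fun k _ => ?_
    rw [Complex.real_smul, map_mul, Complex.conj_ofReal]
  have hsumL : (∑ k : Fin n, (starRingEnd ℂ)
        (fderiv ℝ (fun z => fderiv ℝ (v t) z (EuclideanSpace.single k 1)) x
          (EuclideanSpace.single k 1)))
      = (starRingEnd ℂ) (laplacian' (v t) x) := by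
    rw [laplacian', map_sum]
  have hlap' : laplacian' (u s) X
      = ((Complex.I * (s:ℂ)) ^ (-(n:ℂ)/2) *
          Complex.exp (Complex.I * ((‖X‖ ^ 2 / (2 * s) : ℝ) : ℂ))) *
        ( (n:ℂ) * (Complex.I / (s:ℂ)) * (starRingEnd ℂ) (v t x)
          + Complex.I^2 * ((‖X‖^2:ℝ):ℂ) / (s:ℂ)^2 * (starRingEnd ℂ) (v t x)
          + 2 * (Complex.I / (s:ℂ)) * ((t:ℂ) * ((s:ℝ):ℂ)) *
              (starRingEnd ℂ) (fderiv ℝ (v t) x x)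
          + (t:ℂ)^2 * (starRingEnd ℂ) (laplacian' (v t) x) ) := by
    rw [hlapval]
    have hterm : ∀ k : Fin n, (((Complex.I * (s:ℂ)) ^ (-(n:ℂ)/2) *
        Complex.exp (Complex.I * ((‖X‖ ^ 2 / (2 * s) : ℝ) : ℂ))) *
        ( (Complex.I * ((X k : ℝ) / s)) *
            ((Complex.I * ((X k : ℝ) / s)) * (starRingEnd ℂ) (v t x) +
              (t : ℂ) * (starRingEnd ℂ) (fderiv ℝ (v t) x (EuclideanSpace.single k 1)))
          + (Complex.I * ((1 : ℝ) / s)) * (starRingEnd ℂ) (v t x)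
          + (Complex.I * ((X k : ℝ) / s)) *
              ((t : ℂ) * (starRingEnd ℂ) (fderiv ℝ (v t) x (EuclideanSpace.single k 1)))
          + (t : ℂ) * (t : ℂ) * (starRingEnd ℂ)
              (fderiv ℝ (fun z => fderiv ℝ (v t) z (EuclideanSpace.single k 1)) x
                (EuclideanSpace.single k 1)) ))
        = (((Complex.I * (s:ℂ)) ^ (-(n:ℂ)/2) *
            Complex.exp (Complex.I * ((‖X‖ ^ 2 / (2 * s) : ℝ) : ℂ))) *
            ((Complex.I / (s:ℂ)) * (starRingEnd ℂ) (v t x)))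
          + (((Complex.I * (s:ℂ)) ^ (-(n:ℂ)/2) *
            Complex.exp (Complex.I * ((‖X‖ ^ 2 / (2 * s) : ℝ) : ℂ))) *
            (Complex.I^2 / (s:ℂ)^2 * (starRingEnd ℂ) (v t x))) * ((X k : ℝ) : ℂ)^2
          + (((Complex.I * (s:ℂ)) ^ (-(n:ℂ)/2) *
            Complex.exp (Complex.I * ((‖X‖ ^ 2 / (2 * s) : ℝ) : ℂ))) *
            (2 * (Complex.I / (s:ℂ)) * (t:ℂ))) *
              (((X k : ℝ) : ℂ) * (starRingEnd ℂ)
                (fderiv ℝ (v t) x (EuclideanSpace.single k 1)))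
          + (((Complex.I * (s:ℂ)) ^ (-(n:ℂ)/2) *
            Complex.exp (Complex.I * ((‖X‖ ^ 2 / (2 * s) : ℝ) : ℂ))) * ((t:ℂ) * (t:ℂ))) *
              (starRingEnd ℂ)
                (fderiv ℝ (fun z => fderiv ℝ (v t) z (EuclideanSpace.single k 1)) x
                  (EuclideanSpace.single k 1)) := by
      intro k
      push_cast
      ring
    rw [Finset.sum_congr rfl fun k _ => hterm k]
    rw [Finset.sum_add_distrib, Finset.sum_add_distrib, Finset.sum_add_distrib,
      Finset.sum_const, Finset.card_univ, Fintype.card_fin,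
      ← Finset.mul_sum, ← Finset.mul_sum, ← Finset.mul_sum,
      ← hnorm, hsum2, hsumL, nsmul_eq_mul]
    ring
  ------------------------------------------------------------------
  -- Step 3: plug into the PDE at (s, X)
  have hPDEs := hPDE s hs X
  rw [htrans s hs X, hts, htX] at hPDEs
  have habs : ‖(Complex.I * (s:ℂ)) ^ (-(n:ℂ)/2) *
      Complex.exp (Complex.I * ((‖X‖ ^ 2 / (2 * s) : ℝ) : ℂ)) * (starRingEnd ℂ) (v t x)‖
      = s ^ (-(n:ℝ)/2) * ‖v t x‖ := by
    rw [norm_mul, norm_mul, Complex.norm_conj]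
    rw [show (-(n:ℂ)/2) = ((-(n:ℝ)/2 : ℝ) : ℂ) by push_cast; ring, Complex.norm_cpow_real]
    rw [Complex.norm_exp,
      show (Complex.I * ((‖X‖ ^ 2 / (2 * s) : ℝ) : ℂ)).re = 0 by
        rw [Complex.mul_re, Complex.I_re, Complex.I_im, Complex.ofReal_im]; norm_num,
      Real.exp_zero, mul_one]
    simp [norm_mul, abs_of_pos hs0]
  rw [habs, Real.mul_rpow (by positivity) (by positivity), ← Real.rpow_mul hs0.le] at hPDEs
  rw [hderiv0, hlap'] at hPDEs
  ------------------------------------------------------------------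
  -- replace all s-coefficients by t-forms
  have rE1 : ((-(1 / s ^ 2) : ℝ) : ℂ) = -(t:ℂ)^2 := by
    rw [show (-(1 / s ^ 2) : ℝ) = -t^2 by rw [hs_def]; field_simp]
    push_cast
    ring
  have rE2 : ((-(1 / s ^ 2) * s : ℝ) : ℂ) = -(t:ℂ) := by
    rw [show (-(1 / s ^ 2) * s : ℝ) = -t by rw [hs_def]; field_simp]
    push_cast
    ring
  have rE3 : -(n:ℂ) / (2 * (s:ℂ)) = -(n:ℂ) * (t:ℂ) / 2 := by
    rw [hsC]; field_simp
  have rE4 : -(((‖X‖^2 : ℝ) : ℂ)) / (2 * (s:ℂ)^2) = -(((‖X‖^2 : ℝ) : ℂ)) * (t:ℂ)^2 / 2 := by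
    rw [hsC]; field_simp
  have rE5 : Complex.I / (s:ℂ) = Complex.I * (t:ℂ) := by
    rw [hsC]; field_simp
  have rE6 : Complex.I^2 * ((‖X‖^2:ℝ):ℂ) / (s:ℂ)^2 = Complex.I^2 * ((‖X‖^2:ℝ):ℂ) * (t:ℂ)^2 := by
    rw [hsC]; field_simp
  have rE7 : ((t:ℂ) * ((s:ℝ):ℂ)) = 1 := by
    rw [hsC]; exact mul_inv_cancel₀ htC
  rw [rE1, rE2, rE3, rE4, rE5, rE6, rE7] at hPDEs
  simp only [map_add, map_mul, map_neg, map_pow, Complex.conj_ofReal] at hPDEs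
  ------------------------------------------------------------------
  -- Step 4: key identity
  have key : ((Complex.I * (s:ℂ)) ^ (-(n:ℂ)/2) *
        Complex.exp (Complex.I * ((‖X‖ ^ 2 / (2 * s) : ℝ) : ℂ))) *
        ((t:ℂ)^2 * (starRingEnd ℂ)
          (Complex.I * deriv (fun τ => v τ x) t + (1/2 : ℂ) * laplacian' (v t) x))
      = ((Complex.I * (s:ℂ)) ^ (-(n:ℂ)/2) *
        Complex.exp (Complex.I * ((‖X‖ ^ 2 / (2 * s) : ℝ) : ℂ))) *
        ((lam : ℂ) * ((s ^ (-(n:ℝ)/2 * (p-1)) * ‖v t x‖ ^ (p-1) : ℝ) : ℂ) *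
          (starRingEnd ℂ) (v t x)) := by
    rw [map_add, map_mul, map_mul, Complex.conj_I]
    rw [map_div₀, map_one, map_ofNat]
    linear_combination hPDEs
  have key2 := mul_left_cancel₀ hm0 key
  have key3 := congrArg (starRingEnd ℂ) key2
  simp only [map_mul, map_pow, Complex.conj_conj, Complex.conj_ofReal] at key3
  ------------------------------------------------------------------
  -- Step 5: conclude
  have hsreal : s ^ (-(n:ℝ)/2 * (p-1)) = t^2 * t ^ (((n:ℝ) * (p-1) - 4)/2) := by
    rw [hs_def, Real.inv_rpow ht0.le, ← Real.rpow_neg ht0.le,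
      show (t:ℝ)^2 = t ^ (2:ℝ) by rw [← Real.rpow_natCast t 2]; norm_num,
      ← Real.rpow_add ht0]
    congr 1
    ring
  apply mul_left_cancel₀ (pow_ne_zero 2 htC)
  rw [key3, hsreal]
  push_cast
  ring
end

section
/- Let n ≥ 1 and s > 0. Suppose u and v are complex-valued functions such that v(1/s,·) is a Schwartz function on ℝⁿ and u(s,x) = (is)^{-n/2} e^{i|x|²/(2s)} conj(v(1/s, x/s)) for all x ∈ ℝⁿ, where (is)^{-n/2} is taken with the principal branch of the complex power and conj denotes complex conjugation. Then ‖∇v(1/s,·)‖_{L²(ℝⁿ)} = ‖(x + is∇)u(s,·)‖_{L²(ℝⁿ)}, where (x + is∇)u denotes the ℂⁿ-valued function with k-th component xₖ u(s,x) + is ∂ₖu(s,x) and its L² norm is the square root of the sum over components of the squared L² norms. -/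
/-!
Write `u = c · e · conj (V (x / s))` with the chirp `e x = exp (i |x|² / 2s)`. Since
`∂ₖ e = (i xₖ / s) e`, the term `i s ∂ₖ e` equals `-xₖ e` and cancels the multiplication by `xₖ`,
leaving `(xₖ + i s ∂ₖ) u = i c e · conj (∂ₖV (x / s))`. The chirp has modulus one and
`|c|² = |(i s)^(-n/2)|² = s⁻ⁿ`, while the substitution `x ↦ x / s` multiplies the integral of
`|∂ₖV (x / s)|²` by `sⁿ`.
-/

open MeasureTheory Complex InnerProductSpace Module ComplexConjugate

section

variable {E : Type*} [NormedAddCommGroup E] [InnerProductSpace ℝ E]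

lemma hasFDerivAt_cexp_I_mul_norm_sq_div (s : ℝ) (x : E) :
    HasFDerivAt (fun y : E => cexp (I * ((‖y‖ ^ 2 / (2 * s) : ℝ) : ℂ)))
      ((cexp (I * ((‖x‖ ^ 2 / (2 * s) : ℝ) : ℂ)) * I * (s : ℂ)⁻¹) •
        (ofRealCLM ∘L innerSL ℝ x)) x := by
  have h := ((ofRealCLM.hasFDerivAt.comp x
    ((hasFDerivAt_id x).norm_sq.mul_const (2 * s)⁻¹)).const_mul I).cexp
  simp only [← div_eq_mul_inv] at h
  refine h.congr_fderiv (ContinuousLinearMap.ext fun w => ?_)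
  simp only [Function.comp_apply, ofRealCLM_apply, smul_apply, ContinuousLinearMap.comp_apply,
    coe_innerSL_apply, smul_eq_mul, id_eq, ContinuousLinearMap.id_apply]
  push_cast
  ring

noncomputable def pseudoConformal (c : ℂ) (s : ℝ) (f : E → ℂ) (x : E) : ℂ :=
  c * cexp (I * ((‖x‖ ^ 2 / (2 * s) : ℝ) : ℂ)) * conj (f ((1 / s) • x))

lemma inner_mul_pseudoConformal_add_I_mul_fderiv {c : ℂ} {s : ℝ} (hs : s ≠ 0) {f : E → ℂ}
    {x : E} (hf : DifferentiableAt ℝ f ((1 / s) • x)) (w : E) :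
    (⟪x, w⟫_ℝ : ℂ) * pseudoConformal c s f x + I * s * fderiv ℝ (pseudoConformal c s f) x w
      = I * c * cexp (I * ((‖x‖ ^ 2 / (2 * s) : ℝ) : ℂ)) * conj (fderiv ℝ f ((1 / s) • x) w) := by
  have hscale : HasFDerivAt (fun y : E => conj (f ((1 / s) • y)))
      (conjCLE.toContinuousLinearMap ∘L
        (fderiv ℝ f ((1 / s) • x) ∘L ((1 / s) • ContinuousLinearMap.id ℝ E))) x :=
    conjCLE.hasFDerivAt.comp x (hf.hasFDerivAt.comp x ((hasFDerivAt_id x).const_smul (1 / s)))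
  have h : HasFDerivAt (pseudoConformal c s f) _ x :=
    ((hasFDerivAt_cexp_I_mul_norm_sq_div s x).mul hscale).const_mul c |>.congr_of_eventuallyEq
      (.of_forall fun y => mul_assoc _ _ _)
  rw [h.fderiv]
  simp only [pseudoConformal, smul_add, add_apply, smul_apply, ContinuousLinearMap.comp_apply,
    ContinuousLinearEquiv.coe_coe, conjCLE_apply, map_smul, ContinuousLinearMap.id_apply,
    coe_innerSL_apply, ofRealCLM_apply, smul_eq_mul, real_smul, map_mul, conj_ofReal,
    map_div₀, map_one, ofReal_div, ofReal_one]
  have hs' : (s : ℂ) ≠ 0 := by exact_mod_cast hs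
  field_simp
  linear_combination c * (⟪x, w⟫_ℝ : ℂ) * conj (f ((1 / s) • x)) * I_sq

lemma norm_inner_mul_pseudoConformal_add_I_mul_fderiv {c : ℂ} {s : ℝ} (hs : s ≠ 0) {f : E → ℂ}
    {x : E} (hf : DifferentiableAt ℝ f ((1 / s) • x)) (w : E) :
    ‖(⟪x, w⟫_ℝ : ℂ) * pseudoConformal c s f x + I * s * fderiv ℝ (pseudoConformal c s f) x w‖
      = ‖c‖ * ‖fderiv ℝ f ((1 / s) • x) w‖ := by
  rw [inner_mul_pseudoConformal_add_I_mul_fderiv hs hf, norm_mul, norm_mul, norm_mul, norm_I,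
    norm_exp_I_mul_ofReal, RCLike.norm_conj, one_mul, mul_one]

variable [FiniteDimensional ℝ E] [MeasurableSpace E] [BorelSpace E]

lemma integral_norm_sq_inner_mul_pseudoConformal_add_I_mul_fderiv (μ : Measure E)
    [μ.IsAddHaarMeasure] {c : ℂ} {s : ℝ} (hs : 0 < s) {f : E → ℂ} (hf : Differentiable ℝ f)
    (w : E) :
    ∫ x, ‖(⟪x, w⟫_ℝ : ℂ) * pseudoConformal c s f x +
        I * s * fderiv ℝ (pseudoConformal c s f) x w‖ ^ 2 ∂μ
      = ‖c‖ ^ 2 * s ^ finrank ℝ E * ∫ x, ‖fderiv ℝ f x w‖ ^ 2 ∂μ := by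
  simp_rw [norm_inner_mul_pseudoConformal_add_I_mul_fderiv hs.ne' (hf _), mul_pow, one_div]
  rw [integral_const_mul,
    Measure.integral_comp_inv_smul_of_nonneg μ (fun y => ‖fderiv ℝ f y w‖ ^ 2) hs.le,
    smul_eq_mul, mul_assoc]

end

lemma norm_I_mul_ofReal_cpow_neg_natCast_div_two_sq {s : ℝ} (hs : 0 < s) (n : ℕ) :
    ‖(I * s) ^ (-(n : ℂ) / 2)‖ ^ 2 = (s ^ n)⁻¹ := by
  have hI : ‖I * s‖ = s := by rw [norm_mul, norm_I, one_mul, Complex.norm_of_nonneg hs.le]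
  rw [show -(n : ℂ) / 2 = ((-(n : ℝ) / 2 : ℝ) : ℂ) by push_cast; ring, norm_cpow_real, hI,
    ← Real.rpow_natCast, ← Real.rpow_mul hs.le, ← Real.rpow_natCast, ← Real.rpow_neg hs.le]
  ring_nf

theorem pseudoConformal_gradient_norm_general {n : ℕ} (s : ℝ) (hs : 0 < s)
    (u v : ℝ → EuclideanSpace ℝ (Fin n) → ℂ)
    (V : SchwartzMap (EuclideanSpace ℝ (Fin n)) ℂ) (hV : ∀ x, v (1 / s) x = V x)
    (htrans : ∀ x, u s x = (Complex.I * (s : ℂ)) ^ (-(n : ℂ) / 2) *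
        Complex.exp (Complex.I * ((‖x‖ ^ 2 / (2 * s) : ℝ) : ℂ)) *
        (starRingEnd ℂ) (v (1 / s) ((1 / s) • x))) :
    Real.sqrt (∑ k : Fin n,
        ∫ x, ‖fderiv ℝ (v (1 / s)) x (EuclideanSpace.single k 1)‖ ^ 2)
      = Real.sqrt (∑ k : Fin n,
        ∫ x, ‖(x k : ℂ) * u s x +
          Complex.I * (s : ℂ) * fderiv ℝ (u s) x (EuclideanSpace.single k 1)‖ ^ 2) := by
  have hv : v (1 / s) = V := funext hV
  have hu : u s = pseudoConformal ((I * s) ^ (-(n : ℂ) / 2)) s V :=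
    funext fun x => by rw [htrans, hV]; rfl
  have hcoord (x : EuclideanSpace ℝ (Fin n)) (k : Fin n) :
      x k = ⟪x, EuclideanSpace.single k 1⟫_ℝ := by
    simp [EuclideanSpace.inner_single_right]
  simp_rw [hv, hu, hcoord,
    integral_norm_sq_inner_mul_pseudoConformal_add_I_mul_fderiv volume hs V.differentiable,
    finrank_euclideanSpace_fin, norm_I_mul_ofReal_cpow_neg_natCast_div_two_sq hs,
    inv_mul_cancel₀ (pow_ne_zero n hs.ne'), one_mul]

/-- If `v(1/s,·)` is a Schwartz function and
`u(s,x) = (is)^{-n/2} e^{i|x|²/(2s)} conj(v(1/s, x/s))`, then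
`‖∇v(1/s,·)‖_{L²} = ‖(x + is∇)u(s,·)‖_{L²}`. -/
theorem pseudoConformal_gradient_norm {n : ℕ} (hn : 1 ≤ n) (s : ℝ) (hs : 0 < s)
    (u v : ℝ → EuclideanSpace ℝ (Fin n) → ℂ)
    (V : SchwartzMap (EuclideanSpace ℝ (Fin n)) ℂ) (hV : ∀ x, v (1 / s) x = V x)
    (htrans : ∀ x, u s x = (Complex.I * (s : ℂ)) ^ (-(n : ℂ) / 2) *
        Complex.exp (Complex.I * ((‖x‖ ^ 2 / (2 * s) : ℝ) : ℂ)) *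
        (starRingEnd ℂ) (v (1 / s) ((1 / s) • x))) :
    Real.sqrt (∑ k : Fin n,
        ∫ x, ‖fderiv ℝ (v (1 / s)) x (EuclideanSpace.single k 1)‖ ^ 2)
      = Real.sqrt (∑ k : Fin n,
        ∫ x, ‖(x k : ℂ) * u s x +
          Complex.I * (s : ℂ) * fderiv ℝ (u s) x (EuclideanSpace.single k 1)‖ ^ 2) :=
  pseudoConformal_gradient_norm_general s hs u v V hV htrans
end
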